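/- arXiv:1404.7643 — 5 statements merged into one kernel-verified Lean document; each statement's English description precedes it below -/
import Mathlib

section
/- Let ι be a nonempty finite index set, let p > 0 be a real number, and let c : ι → ℝ and t : ι → ℝ be families of strictly positive reals with ∑_{i∈ι} t_i = T. Then ∑_{i∈ι} c_i · t_i^{-p} ≥ T^{-p} · (∑_{i∈ι} c_i^{1/(1+p)})^{1+p}. -/
/-!
Weighted Hölder with weights `t i`, exponent `1 + p` and `f i = c i ^ (1 / (1 + p)) / t i`
gives `∑ c i ^ (1 / (1 + p)) ≤ T ^ (p / (1 + p)) * (∑ c i * t i ^ (-p)) ^ (1 / (1 + p))`;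
raising to the power `1 + p` and dividing by `T ^ p` is the claim.
-/

open Finset

namespace Real

variable {ι : Type*} (s : Finset ι) {p : ℝ} {c t : ι → ℝ}

lemma sum_rpow_inv_one_add_le (hp : 0 ≤ p) (hc : ∀ i, 0 ≤ c i) (ht : ∀ i, 0 < t i) :
    ∑ i ∈ s, c i ^ (1 + p)⁻¹ ≤
      (∑ i ∈ s, t i) ^ (1 - (1 + p)⁻¹) * (∑ i ∈ s, c i * t i ^ (-p)) ^ (1 + p)⁻¹ := by
  have hr : 1 + p ≠ 0 := by positivity
  have holder := inner_le_weight_mul_Lp_of_nonneg s (by linarith : 1 ≤ 1 + p) t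
    (fun i ↦ c i ^ (1 + p)⁻¹ / t i) (fun i ↦ (ht i).le)
    (fun i ↦ div_nonneg (rpow_nonneg (hc i) _) (ht i).le)
  have h_mul (i : ι) : t i * (c i ^ (1 + p)⁻¹ / t i) = c i ^ (1 + p)⁻¹ :=
    mul_div_cancel₀ _ (ht i).ne'
  have h_pow (i : ι) : t i * (c i ^ (1 + p)⁻¹ / t i) ^ (1 + p) = c i * t i ^ (-p) := by
    rw [div_rpow (rpow_nonneg (hc i) _) (ht i).le, rpow_inv_rpow (hc i) hr,
      rpow_one_add' (ht i).le hr, rpow_neg (ht i).le]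
    field_simp [(ht i).ne']
  simpa only [h_mul, h_pow] using holder

theorem rpow_sum_rpow_one_div_one_add_le (hp : 0 ≤ p) (hc : ∀ i, 0 ≤ c i)
    (ht : ∀ i, 0 < t i) :
    (∑ i ∈ s, c i ^ (1 / (1 + p))) ^ (1 + p) ≤
      (∑ i ∈ s, t i) ^ p * ∑ i ∈ s, c i * t i ^ (-p) := by
  have hr : 1 + p ≠ 0 := by positivity
  have hT : 0 ≤ ∑ i ∈ s, t i := sum_nonneg fun i _ ↦ (ht i).le
  have hA : 0 ≤ ∑ i ∈ s, c i * t i ^ (-p) :=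
    sum_nonneg fun i _ ↦ mul_nonneg (hc i) (rpow_nonneg (ht i).le _)
  calc (∑ i ∈ s, c i ^ (1 / (1 + p))) ^ (1 + p)
      ≤ ((∑ i ∈ s, t i) ^ (1 - (1 + p)⁻¹) * (∑ i ∈ s, c i * t i ^ (-p)) ^ (1 + p)⁻¹) ^
          (1 + p) := by
        rw [one_div]
        gcongr
        · exact sum_nonneg fun i _ ↦ rpow_nonneg (hc i) _
        · exact sum_rpow_inv_one_add_le s hp hc ht
    _ = (∑ i ∈ s, t i) ^ p * ∑ i ∈ s, c i * t i ^ (-p) := by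
        rw [mul_rpow (rpow_nonneg hT _) (rpow_nonneg hA _), ← rpow_mul hT, rpow_inv_rpow hA hr]
        congr 2
        field_simp
        ring

end Real

theorem sum_weighted_rpow_neg_ge_general {ι : Type*} [Fintype ι]
    (p : ℝ) (hp : 0 < p) (c t : ι → ℝ) (hc : ∀ i, 0 < c i) (ht : ∀ i, 0 < t i)
    (T : ℝ) (hT : ∑ i, t i = T) :
    ∑ i, c i * t i ^ (-p) ≥ T ^ (-p) * (∑ i, c i ^ (1 / (1 + p))) ^ (1 + p) := by
  subst hT
  have hT : 0 ≤ ∑ i, t i := sum_nonneg fun i _ ↦ (ht i).le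
  have hA : 0 ≤ ∑ i, c i * t i ^ (-p) :=
    sum_nonneg fun i _ ↦ mul_nonneg (hc i).le (Real.rpow_nonneg (ht i).le _)
  calc (∑ i, t i) ^ (-p) * (∑ i, c i ^ (1 / (1 + p))) ^ (1 + p)
      ≤ (∑ i, t i) ^ (-p) * ((∑ i, t i) ^ p * ∑ i, c i * t i ^ (-p)) := by
        gcongr
        exact Real.rpow_sum_rpow_one_div_one_add_le _ hp.le (fun i ↦ (hc i).le) ht
    _ = ((∑ i, t i) ^ p)⁻¹ * (∑ i, t i) ^ p * ∑ i, c i * t i ^ (-p) := by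
        rw [Real.rpow_neg hT, mul_assoc]
    -- an inequality rather than `= 1`, so that `T = 0` (empty `ι`, with `0⁻¹ = 0`) is covered
    _ ≤ ∑ i, c i * t i ^ (-p) := mul_le_of_le_one_left hA inv_mul_le_one

/-- Core inequality behind the optimal rate-allocation Lemma 1: for positive weights `c` and
positive variables `t` summing to `T`, the weighted sum of negative powers is bounded below
by the Hölder-type allocation value. -/
theorem sum_weighted_rpow_neg_ge {ι : Type*} [Fintype ι] [Nonempty ι]
    (p : ℝ) (hp : 0 < p) (c t : ι → ℝ) (hc : ∀ i, 0 < c i) (ht : ∀ i, 0 < t i)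
    (T : ℝ) (hT : ∑ i, t i = T) :
    ∑ i, c i * t i ^ (-p) ≥ T ^ (-p) * (∑ i, c i ^ (1 / (1 + p))) ^ (1 + p) :=
  sum_weighted_rpow_neg_ge_general p hp c t hc ht T hT
end

section
/- Let ι be a nonempty finite index set, let p > 0 be a real number, let c : ι → ℝ be strictly positive, let T > 0, let S = ∑_{j∈ι} c_j^{1/(1+p)}, and define t*_i = T · c_i^{1/(1+p)} / S for each i. Then t*_i > 0 for all i, ∑_{i∈ι} t*_i = T, and ∑_{i∈ι} c_i · (t*_i)^{-p} = T^{-p} · S^{1+p}. -/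
open Finset Real

theorem sum_mul_div_sum_self {ι : Type*} (s : Finset ι) (w : ι → ℝ) (T : ℝ)
    (hw : ∑ j ∈ s, w j ≠ 0) : ∑ i ∈ s, T * w i / ∑ j ∈ s, w j = T := by
  rw [← sum_div, ← mul_sum, mul_div_assoc, div_self hw, mul_one]

theorem mul_rpow_one_div_one_add_rpow_neg {c p : ℝ} (hc : 0 < c) (hp : 1 + p ≠ 0) :
    c * (c ^ (1 / (1 + p))) ^ (-p) = c ^ (1 / (1 + p)) := by
  have hexp : 1 + 1 / (1 + p) * -p = 1 / (1 + p) := by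
    field_simp
    ring
  rw [← rpow_mul hc.le]
  conv_rhs => rw [← hexp]
  rw [rpow_add hc, rpow_one]

theorem mul_mul_rpow_one_div_one_add_div_rpow_neg {c p T S : ℝ} (hc : 0 < c) (hp : 1 + p ≠ 0)
    (hT : 0 ≤ T) (hS : 0 ≤ S) :
    c * (T * c ^ (1 / (1 + p)) / S) ^ (-p) = T ^ (-p) * S ^ p * c ^ (1 / (1 + p)) := by
  have hw : 0 < c ^ (1 / (1 + p)) := rpow_pos_of_pos hc _
  rw [div_rpow (by positivity) hS, mul_rpow hT hw.le, rpow_neg hS, div_inv_eq_mul]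
  linear_combination T ^ (-p) * S ^ p * mul_rpow_one_div_one_add_rpow_neg hc hp

/-- Attainment part of the optimal rate-allocation Lemma 1: the explicit allocation
`t*_i = T · c_i^{1/(1+p)} / S` is positive, feasible (sums to `T`), and achieves the value
`T^{-p} · S^{1+p}` where `S = ∑ c_j^{1/(1+p)}`. -/
theorem optimal_allocation_attains {ι : Type*} [Fintype ι] [Nonempty ι]
    (p : ℝ) (hp : 0 < p) (c : ι → ℝ) (hc : ∀ i, 0 < c i) (T : ℝ) (hT : 0 < T)
    (S : ℝ) (hS : S = ∑ j, c j ^ (1 / (1 + p)))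
    (tstar : ι → ℝ) (htstar : ∀ i, tstar i = T * c i ^ (1 / (1 + p)) / S) :
    (∀ i, 0 < tstar i) ∧ (∑ i, tstar i = T) ∧
      ∑ i, c i * tstar i ^ (-p) = T ^ (-p) * S ^ (1 + p) := by
  obtain rfl : tstar = fun i => T * c i ^ (1 / (1 + p)) / S := funext htstar
  have h1p : 1 + p ≠ 0 := by linarith
  have hw : ∀ i, 0 < c i ^ (1 / (1 + p)) := fun i => rpow_pos_of_pos (hc i) _
  have hSpos : 0 < S := hS ▸ sum_pos (fun j _ => hw j) univ_nonempty
  refine ⟨fun i => div_pos (mul_pos hT (hw i)) hSpos, ?_, ?_⟩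
  · rw [hS]
    exact sum_mul_div_sum_self univ _ T (hS ▸ hSpos.ne')
  · calc ∑ i, c i * (T * c i ^ (1 / (1 + p)) / S) ^ (-p)
        = ∑ i, T ^ (-p) * S ^ p * c i ^ (1 / (1 + p)) :=
          sum_congr rfl fun i _ =>
            mul_mul_rpow_one_div_one_add_div_rpow_neg (hc i) h1p hT.le hSpos.le
      _ = T ^ (-p) * S ^ (1 + p) := by
          rw [← mul_sum, ← hS, rpow_one_add' hSpos.le h1p]
          ring
end

section
/- (Lemma 1) Let N ≥ 1 be a natural number, let V_{2,N} = 2 · ((N/2) · Γ(N/2))^{2/N} · ((N+2)/N)^{N/2} (a positive real constant, Γ the real Gamma function), let ι be a nonempty finite index set, let ω : ι → ℝ be strictly positive weights, let M_i (i ∈ ι) be N×N real positive definite matrices (so det M_i > 0), and let b_t ∈ ℝ. For a rate allocation b : ι → ℝ define Δ₂(b) = ∑_{i∈ι} ω_i · (2^{b_i})^{-2/N} · V_{2,N} · (det M_i)^{1/N}. Set u_i = (ω_i · (det M_i)^{1/N})^{N/(N+2)} and S = ∑_{j∈ι} u_j, and define b*_i by 2^{b*_i} = 2^{b_t} · u_i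 / S. Then: (a) ∑_{i∈ι} 2^{b*_i} = 2^{b_t}; (b) for every b : ι → ℝ with ∑_{i∈ι} 2^{b_i} = 2^{b_t}, one has Δ₂(b) ≥ (2^{b_t})^{-2/N} · V_{2,N} · S^{(N+2)/N}; and (c) Δ₂(b*) = (2^{b_t})^{-2/N} · V_{2,N} · S^{(N+2)/N}. -/
/-!
With `α = 2 / N`, `x i = 2 ^ b i` and `X = 2 ^ bt`, the weights `ω i * (det M i) ^ (1 / N)` are
exactly `u i ^ (1 + α)`, so `Δ b = V * ∑ i, u i ^ (1 + α) * x i ^ (-α)`. Radon's inequality bounds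
this sum below by `S ^ (1 + α) / X ^ α` under the constraint `∑ i, x i = X`, and the proportional
allocation `x i = (X / S) * u i` turns every term into `(X / S) ^ (-α) * u i`, attaining the bound.
-/

open Finset

namespace Real

variable {ι : Type*}

/-- Radon's inequality, obtained from the weighted Hölder inequality with weights `x i` and
values `u i / x i`. -/
theorem rpow_sum_le_rpow_sum_mul_sum_rpow_mul_rpow_neg (s : Finset ι) {α : ℝ} (hα : 0 ≤ α)
    {u x : ι → ℝ} (hu : ∀ i, 0 ≤ u i) (hx : ∀ i, 0 < x i) :
    (∑ i ∈ s, u i) ^ (1 + α) ≤ (∑ i ∈ s, x i) ^ α * ∑ i ∈ s, u i ^ (1 + α) * x i ^ (-α) := by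
  have hp : 0 < 1 + α := by linarith
  have hterm : ∀ i, x i * (u i / x i) ^ (1 + α) = u i ^ (1 + α) * x i ^ (-α) := fun i => by
    rw [div_rpow (hu i) (hx i).le, rpow_neg (hx i).le, rpow_add (hx i), rpow_one]
    field_simp
    exact mul_div_mul_left _ _ (hx i).ne'
  have holder := inner_le_weight_mul_Lp_of_nonneg s (le_add_of_nonneg_right hα) x
    (fun i => u i / x i) (fun i => (hx i).le) (fun i => div_nonneg (hu i) (hx i).le)
  simp only [mul_div_cancel₀ _ (hx _).ne', hterm] at holder
  calc (∑ i ∈ s, u i) ^ (1 + α)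
      ≤ ((∑ i ∈ s, x i) ^ (1 - (1 + α)⁻¹) *
          (∑ i ∈ s, u i ^ (1 + α) * x i ^ (-α)) ^ (1 + α)⁻¹) ^ (1 + α) :=
        rpow_le_rpow (sum_nonneg fun i _ => hu i) holder hp.le
    _ = (∑ i ∈ s, x i) ^ α * ∑ i ∈ s, u i ^ (1 + α) * x i ^ (-α) := by
        have hX : 0 ≤ ∑ i ∈ s, x i := sum_nonneg fun i _ => (hx i).le
        have hT : 0 ≤ ∑ i ∈ s, u i ^ (1 + α) * x i ^ (-α) :=
          sum_nonneg fun i _ => mul_nonneg (rpow_nonneg (hu i) _) (rpow_nonneg (hx i).le _)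
        rw [mul_rpow (rpow_nonneg hX _) (rpow_nonneg hT _), ← rpow_mul hX, ← rpow_mul hT,
          inv_mul_cancel₀ hp.ne', rpow_one]
        congr 2
        field_simp
        ring

theorem sum_rpow_mul_const_mul_rpow_neg (s : Finset ι) (α : ℝ) {c : ℝ} (hc : 0 < c) {u : ι → ℝ}
    (hu : ∀ i ∈ s, 0 < u i) :
    ∑ i ∈ s, u i ^ (1 + α) * (c * u i) ^ (-α) = c ^ (-α) * ∑ i ∈ s, u i := by
  rw [mul_sum]
  refine sum_congr rfl fun i hi => ?_
  rw [mul_rpow hc.le (hu i hi).le, mul_left_comm, ← rpow_add (hu i hi),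
    add_neg_cancel_right, rpow_one, mul_comm]

end Real

open Real

/-- Lemma 1 of the paper: optimal rate allocation for the high-rate GMM vector quantizer.
`Δ₂(b) = ∑ i, ω_i (2^{b_i})^{-2/N} V_{2,N} (det M_i)^{1/N}` is minimized, under the total-rate
constraint `∑ i, 2^{b_i} = 2^{b_t}`, by the allocation `2^{b*_i} = 2^{b_t} u_i / S`, with minimum
value `(2^{b_t})^{-2/N} V_{2,N} S^{(N+2)/N}` where `u_i = (ω_i (det M_i)^{1/N})^{N/(N+2)}` and
`S = ∑ u_j`. -/
theorem optimal_rate_allocation_lemma1 (N : ℕ) (hN : 1 ≤ N)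
    (V : ℝ)
    (hV : V = 2 * (((N : ℝ) / 2) * Real.Gamma ((N : ℝ) / 2)) ^ ((2 : ℝ) / N) *
      (((N : ℝ) + 2) / (N : ℝ)) ^ ((N : ℝ) / 2))
    {ι : Type*} [Fintype ι] [Nonempty ι]
    (ω : ι → ℝ) (hω : ∀ i, 0 < ω i)
    (M : ι → Matrix (Fin N) (Fin N) ℝ) (hM : ∀ i, (M i).PosDef)
    (bt : ℝ)
    (Δ : (ι → ℝ) → ℝ)
    (hΔ : ∀ b : ι → ℝ,
      Δ b = ∑ i, ω i * ((2 : ℝ) ^ (b i)) ^ (-(2 : ℝ) / N) * V * (M i).det ^ ((1 : ℝ) / N))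
    (u : ι → ℝ) (hu : ∀ i, u i = (ω i * (M i).det ^ ((1 : ℝ) / N)) ^ ((N : ℝ) / ((N : ℝ) + 2)))
    (S : ℝ) (hS : S = ∑ j, u j)
    (bstar : ι → ℝ) (hbstar : ∀ i, (2 : ℝ) ^ (bstar i) = (2 : ℝ) ^ bt * u i / S) :
    (∑ i, (2 : ℝ) ^ (bstar i) = (2 : ℝ) ^ bt) ∧
    (∀ b : ι → ℝ, (∑ i, (2 : ℝ) ^ (b i) = (2 : ℝ) ^ bt) →
      Δ b ≥ ((2 : ℝ) ^ bt) ^ (-(2 : ℝ) / N) * V * S ^ (((N : ℝ) + 2) / N)) ∧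
    Δ bstar = ((2 : ℝ) ^ bt) ^ (-(2 : ℝ) / N) * V * S ^ (((N : ℝ) + 2) / N) := by
  have hN₀ : (0 : ℝ) < N := by exact_mod_cast hN
  set α : ℝ := 2 / N
  have hα : 0 < α := by positivity
  have hexp : ((N : ℝ) + 2) / N = 1 + α := by rw [add_div, div_self hN₀.ne']
  rw [hexp, neg_div]
  have hV₀ : 0 ≤ V := by rw [hV]; positivity
  have hX : 0 < (2 : ℝ) ^ bt := by positivity
  have ha : ∀ i, 0 < ω i * (M i).det ^ ((1 : ℝ) / N) :=
    fun i => mul_pos (hω i) (rpow_pos_of_pos (hM i).det_pos _)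
  have hu₀ : ∀ i, 0 < u i := fun i => hu i ▸ rpow_pos_of_pos (ha i) _
  have hS₀ : 0 < S := hS ▸ sum_pos (fun i _ => hu₀ i) univ_nonempty
  have hu_rpow : ∀ i, u i ^ (1 + α) = ω i * (M i).det ^ ((1 : ℝ) / N) := fun i => by
    rw [hu i, ← rpow_mul (ha i).le, ← hexp, div_mul_div_cancel₀' hN₀.ne', div_self (by positivity),
      rpow_one]
  have hΔu : ∀ b, Δ b = V * ∑ i, u i ^ (1 + α) * ((2 : ℝ) ^ b i) ^ (-α) := fun b => by
    rw [hΔ b, mul_sum, neg_div]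
    exact sum_congr rfl fun i _ => by rw [hu_rpow]; ring
  have hbstar' : ∀ i, (2 : ℝ) ^ bstar i = 2 ^ bt / S * u i := fun i => by rw [hbstar]; ring
  refine ⟨?_, fun b hb => ?_, ?_⟩
  · simp only [hbstar', ← mul_sum, ← hS, div_mul_cancel₀ _ hS₀.ne']
  · have radon := rpow_sum_le_rpow_sum_mul_sum_rpow_mul_rpow_neg univ hα.le
      (fun i => (hu₀ i).le) (fun i => rpow_pos_of_pos two_pos (b i))
    rw [← hS, hb] at radon
    rw [hΔu b, ge_iff_le, mul_comm _ V, mul_assoc]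
    gcongr
    rwa [rpow_neg hX.le, inv_mul_le_iff₀ (rpow_pos_of_pos hX α)]
  · rw [hΔu, sum_congr rfl fun i _ => by rw [hbstar' i],
      sum_rpow_mul_const_mul_rpow_neg _ _ (div_pos hX hS₀) fun i _ => hu₀ i, ← hS,
      rpow_add hS₀, rpow_one, div_rpow hX.le hS₀.le, rpow_neg hS₀.le, div_inv_eq_mul]
    ring
end

section
/- Let N ≥ 1 be a natural number, ι a nonempty finite index set, ω : ι → ℝ and c : ι → ℝ strictly positive families, T > 0. Set u_i = (ω_i c_i)^{N/(N+2)}, S = ∑_{j∈ι} u_j, and t*_i = T · u_i / S. Then ∑_{i∈ι} ω_i · c_i² · (t*_i)^{-4/N} = T^{-4/N} · S^{4/N} · ∑_{i∈ι} ω_i^{(N-2)/(N+2)} · c_i^{2N/(N+2)}. -/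
open Finset Real

/-! Writing `t*_i = T u_i / S`, each summand factors as `T^{-4/N} S^{4/N} · ω_i c_i² u_i^{-4/N}`,
and `u_i^{-4/N} = (ω_i c_i)^{-4/(N+2)}`, which lowers the exponents of `ω_i` and `c_i`
by `4/(N+2)`. -/

lemma mul_div_rpow_neg {T u S : ℝ} (hT : 0 ≤ T) (hu : 0 ≤ u) (hS : 0 ≤ S) (p : ℝ) :
    (T * u / S) ^ (-p) = T ^ (-p) * S ^ p * u ^ (-p) := by
  rw [mul_div_assoc, mul_rpow hT (div_nonneg hu hS), div_rpow hu hS, rpow_neg hS p,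
    div_inv_eq_mul]
  ring

lemma mul_sq_mul_rpow_rpow_neg_div {N : ℝ} (hN : N ≠ 0) (hN2 : N + 2 ≠ 0) {w c : ℝ}
    (hw : 0 < w) (hc : 0 < c) :
    w * c ^ 2 * ((w * c) ^ (N / (N + 2))) ^ (-4 / N)
      = w ^ ((N - 2) / (N + 2)) * c ^ (2 * N / (N + 2)) := by
  have hexp : N / (N + 2) * (-4 / N) = -4 / (N + 2) := by field_simp
  have hw_exp : (N - 2) / (N + 2) = 1 + -4 / (N + 2) := by field_simp; ring
  have hc_exp : 2 * N / (N + 2) = 2 + -4 / (N + 2) := by field_simp; ring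
  rw [← rpow_mul (mul_pos hw hc).le, hexp, mul_rpow hw.le hc.le, hw_exp, hc_exp,
    rpow_add hw, rpow_add hc, rpow_one, rpow_two]
  ring

theorem delta4_at_optimal_allocation_general (N : ℕ) (hN : 1 ≤ N)
    {ι : Type*} [Fintype ι]
    (ω c : ι → ℝ) (hω : ∀ i, 0 < ω i) (hc : ∀ i, 0 < c i)
    (T : ℝ) (hT : 0 < T)
    (u : ι → ℝ) (hu : ∀ i, u i = (ω i * c i) ^ ((N : ℝ) / ((N : ℝ) + 2)))
    (S : ℝ) (hS : S = ∑ j, u j)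
    (tstar : ι → ℝ) (ht : ∀ i, tstar i = T * u i / S) :
    ∑ i, ω i * c i ^ 2 * tstar i ^ (-(4 : ℝ) / N)
      = T ^ (-(4 : ℝ) / N) * S ^ ((4 : ℝ) / N) *
        ∑ i, ω i ^ (((N : ℝ) - 2) / ((N : ℝ) + 2)) * c i ^ ((2 * (N : ℝ)) / ((N : ℝ) + 2)) := by
  have hN0 : (N : ℝ) ≠ 0 := Nat.cast_ne_zero.mpr (by omega)
  have hu0 (j : ι) : 0 ≤ u j := hu j ▸ rpow_nonneg (mul_pos (hω j) (hc j)).le _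
  have hS0 : 0 ≤ S := hS ▸ sum_nonneg fun j _ => hu0 j
  rw [mul_sum]
  refine sum_congr rfl fun i _ => ?_
  rw [ht i, neg_div, mul_div_rpow_neg hT.le (hu0 i) hS0, ← neg_div, hu i,
    ← mul_sq_mul_rpow_rpow_neg_div hN0 (by positivity) (hω i) (hc i)]
  ring

/-- The fourth-moment high-rate distortion evaluated at the optimal rate allocation of Lemma 1:
with `u_i = (ω_i c_i)^{N/(N+2)}`, `S = ∑ u_j` and `t*_i = T u_i / S`, one has
`∑ i, ω_i c_i² (t*_i)^{-4/N} = T^{-4/N} S^{4/N} ∑ i, ω_i^{(N-2)/(N+2)} c_i^{2N/(N+2)}`. -/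
theorem delta4_at_optimal_allocation (N : ℕ) (hN : 1 ≤ N)
    {ι : Type*} [Fintype ι] [Nonempty ι]
    (ω c : ι → ℝ) (hω : ∀ i, 0 < ω i) (hc : ∀ i, 0 < c i)
    (T : ℝ) (hT : 0 < T)
    (u : ι → ℝ) (hu : ∀ i, u i = (ω i * c i) ^ ((N : ℝ) / ((N : ℝ) + 2)))
    (S : ℝ) (hS : S = ∑ j, u j)
    (tstar : ι → ℝ) (ht : ∀ i, tstar i = T * u i / S) :
    ∑ i, ω i * c i ^ 2 * tstar i ^ (-(4 : ℝ) / N)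
      = T ^ (-(4 : ℝ) / N) * S ^ ((4 : ℝ) / N) *
        ∑ i, ω i ^ (((N : ℝ) - 2) / ((N : ℝ) + 2)) * c i ^ ((2 * (N : ℝ)) / ((N : ℝ) + 2)) :=
  delta4_at_optimal_allocation_general N hN ω c hω hc T hT u hu S hS tstar ht
end

section
/- (Block BPDN, exactly block-sparse case) Let Q, R, N, K ≥ 1 be natural numbers with M = Q·R, and view vectors x ∈ ℝ^M as R blocks x_1, …, x_R ∈ ℝ^Q. Call z ∈ ℝ^M block K-sparse if at most K of its blocks are nonzero. Let A be an N×M real matrix and let δ ∈ (0, √2 − 1) be such that (1 − δ)‖z‖₂² ≤ ‖A z‖₂² ≤ (1 + δ)‖z‖₂² for every block 2K-sparse z ∈ ℝ^M. Let x ∈ ℝ^M be block K-sparse, let n ∈ ℝ^N with ‖n‖₂ ≤ ε, let y = A x + n, and let x̂ be any minimizer of ∑_{r=1}^R ‖z_r‖₂ over {z ∈ ℝ^M : ‖y − A z‖₂ ≤ ε}. Then ‖x − x̂‖₂ ≤ (4 ε √(1 + δ)) / (1 − (1 + √2) δ). -/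
open Finset

/-- The Euclidean (ℓ₂) norm of a finitely-indexed real vector. -/
noncomputable def euclNorm {ι : Type*} [Fintype ι] (z : ι → ℝ) : ℝ :=
  Real.sqrt (∑ i, z i ^ 2)

/-- A vector of `ℝ^{Q·R}`, indexed by block `r ∈ Fin R` and within-block position `q ∈ Fin Q`,
is block `K`-sparse if at most `K` of its `R` blocks are nonzero. -/
def BlockSparse (Q R K : ℕ) (z : Fin R × Fin Q → ℝ) : Prop :=
  {r : Fin R | ∃ q, z (r, q) ≠ 0}.ncard ≤ K

/-!
Write `h = x - x̂` and let `T₀` be the block support of `x`. Since `x` and `x̂` are both feasible,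
`‖A h‖₂ ≤ 2ε`; since `x̂` minimizes the block `ℓ₁` norm, `h` lies in the cone
`∑_{r ∉ T₀} ‖h_r‖₂ ≤ ∑_{r ∈ T₀} ‖h_r‖₂`. Split `T₀ᶜ` into chunks `T₁, T₂, …` of `K` blocks each,
in decreasing order of `‖h_r‖₂`. Every block of `T_{j+1}` is at most the average block of `T_j`,
so `∑_{j ≥ 2} ‖h_{T_j}‖₂ ≤ K^{-1/2} ∑_{r ∉ T₀} ‖h_r‖₂ ≤ ‖h_{T₀}‖₂ ≤ ‖h_{T₀ ∪ T₁}‖₂`. Polarizing the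
block-RIP gives `|⟪A u, A v⟫| ≤ δ ‖u‖₂ ‖v‖₂` for disjointly supported block `K`-sparse `u, v`, and
expanding `‖A h_{T₀ ∪ T₁}‖₂² = ⟪A h_{T₀ ∪ T₁}, A h⟫ - ∑_{j ≥ 2} ⟪A h_{T₀ ∪ T₁}, A h_{T_j}⟫` yields
`(1 - (1 + √2) δ) ‖h_{T₀ ∪ T₁}‖₂ ≤ √(1 + δ) ‖A h‖₂`. Finally `‖h‖₂ ≤ 2 ‖h_{T₀ ∪ T₁}‖₂`.
-/

open Matrix

section EuclNorm

variable {ι : Type*} [Fintype ι]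

theorem euclNorm_eq_norm (z : ι → ℝ) : euclNorm z = ‖WithLp.toLp 2 z‖ := by
  simp [euclNorm, EuclideanSpace.norm_eq]

theorem euclNorm_nonneg (z : ι → ℝ) : 0 ≤ euclNorm z := Real.sqrt_nonneg _

theorem euclNorm_eq_zero {z : ι → ℝ} : euclNorm z = 0 ↔ z = 0 := by
  rw [euclNorm_eq_norm, norm_eq_zero, WithLp.toLp_eq_zero]

@[simp]
theorem euclNorm_zero : euclNorm (0 : ι → ℝ) = 0 := euclNorm_eq_zero.2 rfl

theorem euclNorm_neg (z : ι → ℝ) : euclNorm (-z) = euclNorm z := by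
  rw [euclNorm_eq_norm, euclNorm_eq_norm, WithLp.toLp_neg, norm_neg]

theorem euclNorm_smul (c : ℝ) (z : ι → ℝ) : euclNorm (c • z) = |c| * euclNorm z := by
  rw [euclNorm_eq_norm, euclNorm_eq_norm, WithLp.toLp_smul, norm_smul, Real.norm_eq_abs]

theorem sq_euclNorm (z : ι → ℝ) : euclNorm z ^ 2 = ∑ i, z i ^ 2 :=
  Real.sq_sqrt (sum_nonneg fun _ _ => sq_nonneg _)

theorem sq_euclNorm_eq_dotProduct (z : ι → ℝ) : euclNorm z ^ 2 = z ⬝ᵥ z := by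
  rw [sq_euclNorm]
  simp only [dotProduct, sq]

theorem euclNorm_add_le (z w : ι → ℝ) : euclNorm (z + w) ≤ euclNorm z + euclNorm w := by
  simpa only [euclNorm_eq_norm, WithLp.toLp_add] using norm_add_le _ _

theorem euclNorm_sub_le (z w : ι → ℝ) : euclNorm (z - w) ≤ euclNorm z + euclNorm w := by
  simpa only [euclNorm_eq_norm, WithLp.toLp_sub] using norm_sub_le _ _

theorem euclNorm_le_add_euclNorm_sub (z w : ι → ℝ) :
    euclNorm z ≤ euclNorm w + euclNorm (z - w) := by
  simpa only [euclNorm_eq_norm, WithLp.toLp_sub] using norm_le_insert' _ _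

theorem euclNorm_sum_le {α : Type*} (s : Finset α) (f : α → ι → ℝ) :
    euclNorm (∑ a ∈ s, f a) ≤ ∑ a ∈ s, euclNorm (f a) := by
  simpa only [euclNorm_eq_norm, WithLp.toLp_sum] using norm_sum_le _ _

theorem abs_dotProduct_le (z w : ι → ℝ) : |z ⬝ᵥ w| ≤ euclNorm z * euclNorm w := by
  refine abs_le_of_sq_le_sq ?_ (mul_nonneg (euclNorm_nonneg z) (euclNorm_nonneg w))
  rw [mul_pow, sq_euclNorm, sq_euclNorm]
  exact sum_mul_sq_le_sq_mul_sq _ _ _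

end EuclNorm

theorem sqrt_sum_sq_le_sum_div_sqrt {α : Type*} {f : α → ℝ} (hf : ∀ a, 0 ≤ f a)
    {s t : Finset α} {K : ℕ} (ht : #t ≤ K) (hts : ∀ a ∈ t, K * f a ≤ ∑ b ∈ s, f b) :
    √(∑ a ∈ t, f a ^ 2) ≤ (∑ b ∈ s, f b) / √K := by
  obtain rfl | hK := K.eq_zero_or_pos
  · simp [card_eq_zero.1 (Nat.le_zero.1 ht)]
  have hK' : (0 : ℝ) < K := Nat.cast_pos.2 hK
  set S := ∑ b ∈ s, f b
  rw [Real.sqrt_le_left (div_nonneg (sum_nonneg fun b _ => hf b) (Real.sqrt_nonneg _)), div_pow,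
    Real.sq_sqrt hK'.le]
  calc ∑ a ∈ t, f a ^ 2 ≤ ∑ _a ∈ t, (S / K) ^ 2 :=
        sum_le_sum fun a ha => pow_le_pow_left₀ (hf a) ((le_div_iff₀' hK').2 (hts a ha)) 2
    _ = #t * (S / K) ^ 2 := by simp
    _ ≤ K * (S / K) ^ 2 := by gcongr
    _ = S ^ 2 / K := by field_simp

section Chunks

variable {α : Type*} [DecidableEq α]

theorem exists_top_subset (f : α → ℝ) {s : Finset α} {k : ℕ} (hk : k ≤ #s) :
    ∃ t ⊆ s, #t = k ∧ ∀ a ∈ s \ t, ∀ b ∈ t, f a ≤ f b := by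
  induction k with
  | zero => exact ⟨∅, empty_subset _, card_empty, by simp⟩
  | succ k ih =>
    obtain ⟨t, hts, htk, htop⟩ := ih (by omega)
    have hne : (s \ t).Nonempty := by
      rw [← card_pos, card_sdiff_of_subset hts]; omega
    obtain ⟨m, hm, hmax⟩ := (s \ t).exists_max_image f hne
    refine ⟨insert m t, insert_subset (mem_sdiff.1 hm).1 hts, ?_, ?_⟩
    · rw [card_insert_of_notMem (mem_sdiff.1 hm).2, htk]
    · intro a ha b hb
      have ha' : a ∈ s \ t := sdiff_subset_sdiff subset_rfl (subset_insert m t) ha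
      rcases mem_insert.1 hb with rfl | hb
      · exact hmax a ha'
      · exact htop a ha' b hb

/-- Peel off the `K` largest elements of `s` (with respect to `f`), then recurse on the rest. -/
theorem exists_decreasing_chunks (f : α → ℝ) {K : ℕ} (hK : 0 < K) (s : Finset α) :
    ∃ (n : ℕ) (T : ℕ → Finset α), (range (n + 1)).biUnion T = s ∧
      (range (n + 1) : Set ℕ).PairwiseDisjoint T ∧ (∀ j, #(T j) ≤ K) ∧
      ∀ j, ∀ a ∈ T (j + 1), K * f a ≤ ∑ b ∈ T j, f b := by
  induction s using Finset.strongInduction with | H s ih => ?_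
  rcases s.eq_empty_or_nonempty with rfl | hs
  · exact ⟨0, fun _ => ∅, by simp, by simp, by simp, by simp⟩
  obtain ⟨t, hts, htK, htop⟩ := exists_top_subset f (min_le_right K #s)
  have ht : t.Nonempty := by rw [← card_pos, htK]; exact lt_min hK (card_pos.2 hs)
  obtain ⟨n, T, hcover, hdisj, hcard, hstep⟩ := ih (s \ t) (sdiff_ssubset hts ht)
  have hTsub : ∀ j < n + 1, T j ⊆ s \ t := fun j hj =>
    hcover ▸ subset_biUnion_of_mem T (mem_range.2 hj)
  refine ⟨n + 1, fun j => Nat.casesOn j t T, ?_, ?_, ?_, ?_⟩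
  · rw [range_add_one', biUnion_insert, map_eq_image, image_biUnion]
    change t ∪ (range (n + 1)).biUnion T = s
    rw [hcover, union_sdiff_of_subset hts]
  · have htT : ∀ j < n + 1, Disjoint t (T j) := fun j hj =>
      disjoint_of_subset_right (hTsub j hj) disjoint_sdiff
    rintro (_ | i) hi (_ | j) hj hij
    · exact absurd rfl hij
    · exact htT j (by simpa using hj)
    · exact (htT i (by simpa using hi)).symm
    · exact hdisj (by simpa using hi) (by simpa using hj) (by simpa using hij)
  · rintro (_ | j)
    · exact htK.trans_le (min_le_left _ _)
    · exact hcard j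
  · rintro (_ | j) a ha
    · have hat := hTsub 0 (by omega) ha
      have htK' : #t = K := by
        rcases min_cases K #s with ⟨hmin, -⟩ | ⟨hmin, -⟩
        · rw [htK, hmin]
        · have hst : t = s := eq_of_subset_of_card_le hts (by omega)
          simp [hst] at hat
      calc (K : ℝ) * f a = ∑ _b ∈ t, f a := by simp [htK']
        _ ≤ ∑ b ∈ t, f b := sum_le_sum (htop a hat)
    · exact hstep j a ha

theorem exists_decreasing_chunks_sum_sqrt_le {f : α → ℝ} (hf : ∀ a, 0 ≤ f a) {K : ℕ}
    (hK : 0 < K) (s : Finset α) :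
    ∃ (n : ℕ) (T : ℕ → Finset α), (range (n + 1)).biUnion T = s ∧
      (range (n + 1) : Set ℕ).PairwiseDisjoint T ∧ (∀ j, #(T j) ≤ K) ∧
      ∑ j ∈ range n, √(∑ a ∈ T (j + 1), f a ^ 2) ≤ (∑ a ∈ s, f a) / √K := by
  obtain ⟨n, T, hcover, hdisj, hcard, hstep⟩ := exists_decreasing_chunks f hK s
  refine ⟨n, T, hcover, hdisj, hcard, ?_⟩
  calc ∑ j ∈ range n, √(∑ a ∈ T (j + 1), f a ^ 2)
      ≤ ∑ j ∈ range n, (∑ a ∈ T j, f a) / √K :=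
        sum_le_sum fun j _ => sqrt_sum_sq_le_sum_div_sqrt hf (hcard (j + 1)) (hstep j)
    _ ≤ ∑ j ∈ range (n + 1), (∑ a ∈ T j, f a) / √K :=
        sum_le_sum_of_subset_of_nonneg (range_subset_range.2 n.le_succ) fun j _ _ =>
          div_nonneg (sum_nonneg fun a _ => hf a) (Real.sqrt_nonneg _)
    _ = (∑ a ∈ s, f a) / √K := by rw [← sum_div, ← sum_biUnion hdisj, hcover]

end Chunks

section BlockRestrict

variable {ι κ : Type*} [DecidableEq ι]

def blockRestrict (S : Finset ι) (z : ι × κ → ℝ) : ι × κ → ℝ :=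
  fun p => if p.1 ∈ S then z p else 0

theorem blockRestrict_union {S T : Finset ι} (hST : Disjoint S T) (z : ι × κ → ℝ) :
    blockRestrict (S ∪ T) z = blockRestrict S z + blockRestrict T z := by
  ext p
  by_cases hS : p.1 ∈ S
  · simp [blockRestrict, hS, disjoint_left.1 hST hS]
  · by_cases hT : p.1 ∈ T <;> simp [blockRestrict, hS, hT]

theorem blockRestrict_biUnion {α : Type*} {s : Finset α} {T : α → Finset ι}
    (hT : (s : Set α).PairwiseDisjoint T) (z : ι × κ → ℝ) :
    blockRestrict (s.biUnion T) z = ∑ j ∈ s, blockRestrict (T j) z := by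
  ext p
  simp only [blockRestrict, Finset.sum_apply]
  split_ifs with h
  · obtain ⟨j, hj, hpj⟩ := mem_biUnion.1 h
    rw [sum_eq_single_of_mem j hj fun i hi hij => if_neg fun hpi =>
      disjoint_left.1 (hT hi hj hij) hpi hpj, if_pos hpj]
  · exact (sum_eq_zero fun j hj => if_neg fun hpj => h (mem_biUnion.2 ⟨j, hj, hpj⟩)).symm

theorem blockRestrict_add_blockRestrict_compl [Fintype ι] (S : Finset ι) (z : ι × κ → ℝ) :
    blockRestrict S z + blockRestrict Sᶜ z = z := by
  ext p
  by_cases hS : p.1 ∈ S <;> simp [blockRestrict, hS]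

end BlockRestrict

noncomputable def blockNorm {ι κ : Type*} [Fintype κ] (z : ι × κ → ℝ) (r : ι) : ℝ :=
  euclNorm fun q => z (r, q)

theorem blockNorm_nonneg {ι κ : Type*} [Fintype κ] (z : ι × κ → ℝ) (r : ι) :
    0 ≤ blockNorm z r :=
  euclNorm_nonneg _

section BlockSupport

variable {ι κ : Type*} [Fintype ι] [Fintype κ]

noncomputable def blockSupport (z : ι × κ → ℝ) : Finset ι := {r | ∃ q, z (r, q) ≠ 0}

theorem blockSupport_subset_iff {z : ι × κ → ℝ} {S : Finset ι} :
    blockSupport z ⊆ S ↔ ∀ p : ι × κ, p.1 ∉ S → z p = 0 := by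
  simp only [blockSupport, Finset.subset_iff, mem_filter, mem_univ, true_and]
  constructor
  · intro h p hp
    by_contra hz
    exact hp (h ⟨p.2, hz⟩)
  · rintro h r ⟨q, hq⟩
    by_contra hr
    exact hq (h (r, q) hr)

theorem apply_eq_zero_of_notMem_blockSupport {z : ι × κ → ℝ} {p : ι × κ}
    (hp : p.1 ∉ blockSupport z) : z p = 0 :=
  blockSupport_subset_iff.1 subset_rfl p hp

theorem blockSupport_neg (z : ι × κ → ℝ) : blockSupport (-z) = blockSupport z := by
  simp [blockSupport]

theorem blockSupport_smul_subset (c : ℝ) (z : ι × κ → ℝ) :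
    blockSupport (c • z) ⊆ blockSupport z :=
  blockSupport_subset_iff.2 fun p hp => by
    simp [apply_eq_zero_of_notMem_blockSupport hp]

theorem blockSupport_add_subset [DecidableEq ι] (u v : ι × κ → ℝ) :
    blockSupport (u + v) ⊆ blockSupport u ∪ blockSupport v :=
  blockSupport_subset_iff.2 fun p hp => by
    rw [mem_union, not_or] at hp
    simp [apply_eq_zero_of_notMem_blockSupport hp.1, apply_eq_zero_of_notMem_blockSupport hp.2]

theorem blockSupport_sub_subset [DecidableEq ι] (u v : ι × κ → ℝ) :
    blockSupport (u - v) ⊆ blockSupport u ∪ blockSupport v := by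
  simpa only [sub_eq_add_neg, blockSupport_neg] using blockSupport_add_subset u (-v)

theorem dotProduct_eq_zero_of_disjoint_blockSupport {u v : ι × κ → ℝ}
    (h : Disjoint (blockSupport u) (blockSupport v)) : u ⬝ᵥ v = 0 := by
  refine sum_eq_zero fun p _ => ?_
  by_cases hp : p.1 ∈ blockSupport u
  · rw [apply_eq_zero_of_notMem_blockSupport (disjoint_left.1 h hp), mul_zero]
  · rw [apply_eq_zero_of_notMem_blockSupport hp, zero_mul]

theorem blockSparse_iff {Q R k : ℕ} (z : Fin R × Fin Q → ℝ) :
    BlockSparse Q R k z ↔ #(blockSupport z) ≤ k := by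
  rw [BlockSparse, ← Set.ncard_coe_finset, blockSupport, coe_filter]
  simp

theorem blockSparse_of_subset {Q R k : ℕ} {z : Fin R × Fin Q → ℝ} {S : Finset (Fin R)}
    (hz : blockSupport z ⊆ S) (hS : #S ≤ k) : BlockSparse Q R k z :=
  (blockSparse_iff z).2 ((card_le_card hz).trans hS)

variable [DecidableEq ι]

theorem blockSupport_blockRestrict_subset (S : Finset ι) (z : ι × κ → ℝ) :
    blockSupport (blockRestrict S z) ⊆ S :=
  blockSupport_subset_iff.2 fun _ hp => if_neg hp

theorem sq_euclNorm_blockRestrict (S : Finset ι) (z : ι × κ → ℝ) :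
    euclNorm (blockRestrict S z) ^ 2 = ∑ r ∈ S, blockNorm z r ^ 2 := by
  simp only [sq_euclNorm, blockNorm, Fintype.sum_prod_type, blockRestrict]
  simp [ite_pow, Finset.sum_ite_mem]

theorem euclNorm_blockRestrict (S : Finset ι) (z : ι × κ → ℝ) :
    euclNorm (blockRestrict S z) = √(∑ r ∈ S, blockNorm z r ^ 2) := by
  rw [← sq_euclNorm_blockRestrict, Real.sqrt_sq (euclNorm_nonneg _)]

theorem euclNorm_blockRestrict_mono {S T : Finset ι} (hST : S ⊆ T) (z : ι × κ → ℝ) :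
    euclNorm (blockRestrict S z) ≤ euclNorm (blockRestrict T z) := by
  rw [euclNorm_blockRestrict, euclNorm_blockRestrict]
  exact Real.sqrt_le_sqrt (sum_le_sum_of_subset_of_nonneg hST fun _ _ _ => sq_nonneg _)

theorem sum_blockNorm_le_sqrt_card_mul (S : Finset ι) (z : ι × κ → ℝ) :
    ∑ r ∈ S, blockNorm z r ≤ √(#S) * euclNorm (blockRestrict S z) := by
  rw [euclNorm_blockRestrict, ← Real.sqrt_mul (Nat.cast_nonneg _)]
  exact Real.le_sqrt_of_sq_le sq_sum_le_card_mul_sum_sq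

theorem sum_blockNorm_sub_compl_le {x y : ι × κ → ℝ}
    (hxy : ∑ r, blockNorm y r ≤ ∑ r, blockNorm x r) :
    ∑ r ∈ (blockSupport x)ᶜ, blockNorm (x - y) r ≤ ∑ r ∈ blockSupport x, blockNorm (x - y) r := by
  set S := blockSupport x
  have hout : ∀ r ∈ Sᶜ, blockNorm (x - y) r = blockNorm y r := fun r hr => by
    have hx : (fun q => (x - y) (r, q)) = -fun q => y (r, q) := funext fun q => by
      simp [apply_eq_zero_of_notMem_blockSupport (p := (r, q)) (mem_compl.1 hr)]
    rw [blockNorm, hx, euclNorm_neg, blockNorm]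
  have hin : ∀ r ∈ S, blockNorm x r ≤ blockNorm y r + blockNorm (x - y) r := fun r _ =>
    euclNorm_le_add_euclNorm_sub _ _
  have hx : ∑ r ∈ Sᶜ, blockNorm x r = 0 := sum_eq_zero fun r hr =>
    euclNorm_eq_zero.2 (funext fun _ => apply_eq_zero_of_notMem_blockSupport (mem_compl.1 hr))
  rw [sum_congr rfl hout]
  have := sum_le_sum hin
  rw [sum_add_distrib] at this
  linarith [sum_add_sum_compl S (blockNorm x), sum_add_sum_compl S (blockNorm y)]

/-- `T₁, T 0, T 1, …` are the consecutive `K`-block chunks of `T₀ᶜ` sorted by decreasing block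
norm. -/
theorem exists_blockRestrict_decomposition_of_cone {K : ℕ} (hK : 0 < K) {T₀ : Finset ι}
    (hT₀ : #T₀ ≤ K) {h : ι × κ → ℝ}
    (hcone : ∑ r ∈ T₀ᶜ, blockNorm h r ≤ ∑ r ∈ T₀, blockNorm h r) :
    ∃ (T₁ : Finset ι) (n : ℕ) (T : ℕ → Finset ι), Disjoint T₀ T₁ ∧ #T₁ ≤ K ∧
      (∀ j ∈ range n, Disjoint T₀ (T j) ∧ Disjoint T₁ (T j) ∧ #(T j) ≤ K) ∧
      h = blockRestrict T₀ h + blockRestrict T₁ h + ∑ j ∈ range n, blockRestrict (T j) h ∧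
      ∑ j ∈ range n, euclNorm (blockRestrict (T j) h) ≤ euclNorm (blockRestrict T₀ h) := by
  obtain ⟨n, T, hcover, hdisj, hcard, htail⟩ :=
    exists_decreasing_chunks_sum_sqrt_le (blockNorm_nonneg h) hK T₀ᶜ
  have hT₀T : ∀ j < n + 1, Disjoint T₀ (T j) := fun j hj =>
    disjoint_of_subset_right (hcover ▸ subset_biUnion_of_mem T (mem_range.2 hj))
      disjoint_compl_right
  refine ⟨T 0, n, fun j => T (j + 1), hT₀T 0 n.succ_pos, hcard 0, fun j hj => ?_, ?_, ?_⟩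
  · have hj : j < n := mem_range.1 hj
    exact ⟨hT₀T (j + 1) (by omega), hdisj (by simp) (by simp; omega) (by omega), hcard (j + 1)⟩
  · conv_lhs => rw [← blockRestrict_add_blockRestrict_compl T₀ h, ← hcover,
      blockRestrict_biUnion hdisj, sum_range_succ']
    abel
  · have hK' : √(#T₀ : ℝ) ≤ √K := Real.sqrt_le_sqrt (Nat.cast_le.2 hT₀)
    calc ∑ j ∈ range n, euclNorm (blockRestrict (T (j + 1)) h)
        = ∑ j ∈ range n, √(∑ r ∈ T (j + 1), blockNorm h r ^ 2) := by
          simp only [euclNorm_blockRestrict]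
      _ ≤ (∑ r ∈ T₀ᶜ, blockNorm h r) / √K := htail
      _ ≤ (∑ r ∈ T₀, blockNorm h r) / √K := by gcongr
      _ ≤ √(#T₀ : ℝ) * euclNorm (blockRestrict T₀ h) / √K := by
          gcongr; exact sum_blockNorm_le_sqrt_card_mul T₀ h
      _ ≤ euclNorm (blockRestrict T₀ h) := by
          rw [div_le_iff₀ (Real.sqrt_pos.2 (Nat.cast_pos.2 hK)), mul_comm]
          exact mul_le_mul_of_nonneg_left hK' (euclNorm_nonneg _)

end BlockSupport

def HasBlockRIP {Q R N : ℕ} (A : Matrix (Fin N) (Fin R × Fin Q) ℝ) (k : ℕ) (δ : ℝ) : Prop :=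
  ∀ z : Fin R × Fin Q → ℝ, BlockSparse Q R k z →
    (1 - δ) * (∑ p, z p ^ 2) ≤ ∑ i, (A.mulVec z i) ^ 2 ∧
    ∑ i, (A.mulVec z i) ^ 2 ≤ (1 + δ) * (∑ p, z p ^ 2)

namespace HasBlockRIP

variable {Q R N k K : ℕ} {A : Matrix (Fin N) (Fin R × Fin Q) ℝ} {δ : ℝ}

theorem le_sq_euclNorm_mulVec (hA : HasBlockRIP A k δ) {z : Fin R × Fin Q → ℝ}
    (hz : BlockSparse Q R k z) : (1 - δ) * euclNorm z ^ 2 ≤ euclNorm (A *ᵥ z) ^ 2 := by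
  simpa only [sq_euclNorm] using (hA z hz).1

theorem sq_euclNorm_mulVec_le (hA : HasBlockRIP A k δ) {z : Fin R × Fin Q → ℝ}
    (hz : BlockSparse Q R k z) : euclNorm (A *ᵥ z) ^ 2 ≤ (1 + δ) * euclNorm z ^ 2 := by
  simpa only [sq_euclNorm] using (hA z hz).2

theorem euclNorm_mulVec_le (hA : HasBlockRIP A k δ) {z : Fin R × Fin Q → ℝ}
    (hz : BlockSparse Q R k z) : euclNorm (A *ᵥ z) ≤ √(1 + δ) * euclNorm z := by
  rw [← Real.sqrt_sq (euclNorm_nonneg (A *ᵥ z)), ← Real.sqrt_sq (euclNorm_nonneg z),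
    ← Real.sqrt_mul' _ (sq_nonneg _)]
  exact Real.sqrt_le_sqrt (hA.sq_euclNorm_mulVec_le hz)

/-- Polarization: `4 ⟪A u, A v⟫ = ‖A (u + v)‖² - ‖A (u - v)‖²`, while `‖u ± v‖² = ‖u‖² + ‖v‖²`. -/
theorem mulVec_dotProduct_le (hA : HasBlockRIP A k δ) {u v : Fin R × Fin Q → ℝ}
    {S T : Finset (Fin R)} (hu : blockSupport u ⊆ S) (hv : blockSupport v ⊆ T)
    (hST : Disjoint S T) (hk : #S + #T ≤ k) :
    (A *ᵥ u) ⬝ᵥ (A *ᵥ v) ≤ δ / 2 * (euclNorm u ^ 2 + euclNorm v ^ 2) := by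
  have huv : u ⬝ᵥ v = 0 := dotProduct_eq_zero_of_disjoint_blockSupport (hST.mono hu hv)
  have hk' : #(S ∪ T) ≤ k := (card_union_le S T).trans hk
  have hadd := hA.sq_euclNorm_mulVec_le
    (blockSparse_of_subset ((blockSupport_add_subset u v).trans (union_subset_union hu hv)) hk')
  have hsub := hA.le_sq_euclNorm_mulVec
    (blockSparse_of_subset ((blockSupport_sub_subset u v).trans (union_subset_union hu hv)) hk')
  simp only [sq_euclNorm_eq_dotProduct, mulVec_add, mulVec_sub, add_dotProduct,
    dotProduct_add, sub_dotProduct, dotProduct_sub] at hadd hsub ⊢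
  rw [dotProduct_comm v u, dotProduct_comm (A *ᵥ v) (A *ᵥ u)] at hadd hsub
  nlinarith

theorem mulVec_dotProduct_le_mul (hA : HasBlockRIP A k δ) {u v : Fin R × Fin Q → ℝ}
    {S T : Finset (Fin R)} (hu : blockSupport u ⊆ S) (hv : blockSupport v ⊆ T)
    (hST : Disjoint S T) (hk : #S + #T ≤ k) :
    (A *ᵥ u) ⬝ᵥ (A *ᵥ v) ≤ δ * euclNorm u * euclNorm v := by
  rcases eq_or_ne u 0 with rfl | hu0
  · simp
  rcases eq_or_ne v 0 with rfl | hv0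
  · simp
  set a := euclNorm u
  set b := euclNorm v
  have ha : 0 < a := (euclNorm_nonneg u).lt_of_ne' (euclNorm_eq_zero.not.2 hu0)
  have hb : 0 < b := (euclNorm_nonneg v).lt_of_ne' (euclNorm_eq_zero.not.2 hv0)
  -- rescale to `b • u` and `a • v`, which have equal norms `a * b`
  have h := hA.mulVec_dotProduct_le ((blockSupport_smul_subset b u).trans hu)
    ((blockSupport_smul_subset a v).trans hv) hST hk
  simp only [mulVec_smul, smul_dotProduct, dotProduct_smul, euclNorm_smul, smul_eq_mul,
    abs_of_pos ha, abs_of_pos hb] at h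
  have hab : 0 < b * a := mul_pos hb ha
  nlinarith

theorem abs_mulVec_dotProduct_le (hA : HasBlockRIP A k δ) {u v : Fin R × Fin Q → ℝ}
    {S T : Finset (Fin R)} (hu : blockSupport u ⊆ S) (hv : blockSupport v ⊆ T)
    (hST : Disjoint S T) (hk : #S + #T ≤ k) :
    |(A *ᵥ u) ⬝ᵥ (A *ᵥ v)| ≤ δ * euclNorm u * euclNorm v := by
  refine abs_le.2 ⟨?_, hA.mulVec_dotProduct_le_mul hu hv hST hk⟩
  have h := hA.mulVec_dotProduct_le_mul hu ((blockSupport_neg v).trans_subset hv) hST hk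
  rw [mulVec_neg, dotProduct_neg, euclNorm_neg] at h
  linarith

theorem abs_mulVec_add_dotProduct_le (hA : HasBlockRIP A (2 * K) δ) (hδ : 0 ≤ δ)
    {u₀ u₁ w : Fin R × Fin Q → ℝ} {S₀ S₁ T : Finset (Fin R)} (hu₀ : blockSupport u₀ ⊆ S₀)
    (hu₁ : blockSupport u₁ ⊆ S₁) (hw : blockSupport w ⊆ T) (h01 : Disjoint S₀ S₁)
    (h0T : Disjoint S₀ T) (h1T : Disjoint S₁ T) (hS₀ : #S₀ ≤ K) (hS₁ : #S₁ ≤ K) (hT : #T ≤ K) :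
    |(A *ᵥ (u₀ + u₁)) ⬝ᵥ (A *ᵥ w)| ≤ √2 * δ * euclNorm (u₀ + u₁) * euclNorm w := by
  have h₀ := hA.abs_mulVec_dotProduct_le hu₀ hw h0T (by omega)
  have h₁ := hA.abs_mulVec_dotProduct_le hu₁ hw h1T (by omega)
  have hpyth : euclNorm u₀ ^ 2 + euclNorm u₁ ^ 2 = euclNorm (u₀ + u₁) ^ 2 := by
    simp only [sq_euclNorm_eq_dotProduct, add_dotProduct, dotProduct_add, dotProduct_comm u₁ u₀,
      dotProduct_eq_zero_of_disjoint_blockSupport (h01.mono hu₀ hu₁)]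
    ring
  have hsum : euclNorm u₀ + euclNorm u₁ ≤ √2 * euclNorm (u₀ + u₁) := by
    refine (le_abs_self _).trans
      (abs_le_of_sq_le_sq ?_ (mul_nonneg (Real.sqrt_nonneg _) (euclNorm_nonneg _)))
    rw [mul_pow, Real.sq_sqrt zero_le_two, ← hpyth]
    nlinarith [sq_nonneg (euclNorm u₀ - euclNorm u₁)]
  calc |(A *ᵥ (u₀ + u₁)) ⬝ᵥ (A *ᵥ w)|
      ≤ |(A *ᵥ u₀) ⬝ᵥ (A *ᵥ w)| + |(A *ᵥ u₁) ⬝ᵥ (A *ᵥ w)| := by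
        rw [mulVec_add, add_dotProduct]; exact abs_add_le _ _
    _ ≤ δ * (euclNorm u₀ + euclNorm u₁) * euclNorm w := by linarith
    _ ≤ √2 * δ * euclNorm (u₀ + u₁) * euclNorm w := by
        have := mul_le_mul_of_nonneg_left hsum hδ
        have := euclNorm_nonneg w
        nlinarith

theorem sq_euclNorm_le (hA : HasBlockRIP A (2 * K) δ) (hδ : 0 ≤ δ)
    {u₀ u₁ : Fin R × Fin Q → ℝ} {S₀ S₁ : Finset (Fin R)} (hu₀ : blockSupport u₀ ⊆ S₀)
    (hu₁ : blockSupport u₁ ⊆ S₁) (h01 : Disjoint S₀ S₁) (hS₀ : #S₀ ≤ K) (hS₁ : #S₁ ≤ K)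
    {β : Type*} {s : Finset β} {w : β → Fin R × Fin Q → ℝ} {T : β → Finset (Fin R)}
    (hw : ∀ j ∈ s, blockSupport (w j) ⊆ T j) (h0T : ∀ j ∈ s, Disjoint S₀ (T j))
    (h1T : ∀ j ∈ s, Disjoint S₁ (T j)) (hT : ∀ j ∈ s, #(T j) ≤ K) :
    (1 - δ) * euclNorm (u₀ + u₁) ^ 2 ≤ euclNorm (u₀ + u₁) *
      (√(1 + δ) * euclNorm (A *ᵥ (u₀ + u₁ + ∑ j ∈ s, w j)) + √2 * δ * ∑ j ∈ s, euclNorm (w j)) := by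
  set u := u₀ + u₁
  have hu : BlockSparse Q R (2 * K) u := blockSparse_of_subset
    ((blockSupport_add_subset u₀ u₁).trans (union_subset_union hu₀ hu₁))
    ((card_union_le S₀ S₁).trans (by omega))
  have hsplit : euclNorm (A *ᵥ u) ^ 2 = (A *ᵥ u) ⬝ᵥ (A *ᵥ (u + ∑ j ∈ s, w j)) -
      ∑ j ∈ s, (A *ᵥ u) ⬝ᵥ (A *ᵥ w j) := by
    rw [sq_euclNorm_eq_dotProduct, mulVec_add A u, mulVec_sum, dotProduct_add, dotProduct_sum]
    ring
  have hfull : (A *ᵥ u) ⬝ᵥ (A *ᵥ (u + ∑ j ∈ s, w j)) ≤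
      √(1 + δ) * euclNorm u * euclNorm (A *ᵥ (u + ∑ j ∈ s, w j)) :=
    (le_abs_self _).trans ((abs_dotProduct_le _ _).trans
      (mul_le_mul_of_nonneg_right (hA.euclNorm_mulVec_le hu) (euclNorm_nonneg _)))
  have hcross : -∑ j ∈ s, (A *ᵥ u) ⬝ᵥ (A *ᵥ w j) ≤
      ∑ j ∈ s, √2 * δ * euclNorm u * euclNorm (w j) := by
    rw [← sum_neg_distrib]
    exact sum_le_sum fun j hj => (neg_le_abs _).trans <| hA.abs_mulVec_add_dotProduct_le hδ hu₀
      hu₁ (hw j hj) h01 (h0T j hj) (h1T j hj) hS₀ hS₁ (hT j hj)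
  have hlow := hA.le_sq_euclNorm_mulVec hu
  rw [← mul_sum] at hcross
  nlinarith

theorem euclNorm_le_of_cone (hA : HasBlockRIP A (2 * K) δ) (hK : 0 < K) (hδ0 : 0 ≤ δ)
    (hδ : (1 + √2) * δ < 1) {T₀ : Finset (Fin R)} (hT₀ : #T₀ ≤ K) {h : Fin R × Fin Q → ℝ}
    (hcone : ∑ r ∈ T₀ᶜ, blockNorm h r ≤ ∑ r ∈ T₀, blockNorm h r) :
    euclNorm h ≤ 2 * √(1 + δ) * euclNorm (A *ᵥ h) / (1 - (1 + √2) * δ) := by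
  obtain ⟨T₁, n, T, h01, hT₁, hT, hdecomp, htail⟩ :=
    exists_blockRestrict_decomposition_of_cone hK hT₀ hcone
  have hkey := hA.sq_euclNorm_le (w := fun j => blockRestrict (T j) h) hδ0
    (blockSupport_blockRestrict_subset T₀ h) (blockSupport_blockRestrict_subset T₁ h) h01 hT₀ hT₁
    (fun j _ => blockSupport_blockRestrict_subset _ h) (fun j hj => (hT j hj).1)
    (fun j hj => (hT j hj).2.1) (fun j hj => (hT j hj).2.2)
  rw [← hdecomp] at hkey
  have hu₀ : euclNorm (blockRestrict T₀ h) ≤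
      euclNorm (blockRestrict T₀ h + blockRestrict T₁ h) := by
    rw [← blockRestrict_union h01]
    exact euclNorm_blockRestrict_mono subset_union_left h
  have hh : euclNorm h ≤ euclNorm (blockRestrict T₀ h + blockRestrict T₁ h) +
      ∑ j ∈ range n, euclNorm (blockRestrict (T j) h) := by
    conv_lhs => rw [hdecomp]
    exact (euclNorm_add_le _ _).trans (add_le_add le_rfl (euclNorm_sum_le _ _))
  generalize euclNorm (blockRestrict T₀ h + blockRestrict T₁ h) = U at *
  generalize ∑ j ∈ range n, euclNorm (blockRestrict (T j) h) = t at *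
  have hD : 0 < 1 - (1 + √2) * δ := by linarith
  have hDU : (1 - (1 + √2) * δ) * U ≤ √(1 + δ) * euclNorm (A *ᵥ h) := by
    rcases (euclNorm_nonneg _).trans hu₀ |>.eq_or_lt with hU0 | hU0
    · rw [← hU0, mul_zero]
      exact mul_nonneg (Real.sqrt_nonneg _) (euclNorm_nonneg _)
    · have := mul_le_mul_of_nonneg_left (htail.trans hu₀) (mul_nonneg (Real.sqrt_nonneg 2) hδ0)
      nlinarith
  rw [le_div_iff₀ hD]
  nlinarith

end HasBlockRIP

theorem block_bpdn_recovery_exact_general (Q R N K : ℕ) (hK : 1 ≤ K)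
    (A : Matrix (Fin N) (Fin R × Fin Q) ℝ)
    (δ : ℝ) (hδ0 : 0 < δ) (hδ : δ < Real.sqrt 2 - 1)
    (hRIP : ∀ z : Fin R × Fin Q → ℝ, BlockSparse Q R (2 * K) z →
      (1 - δ) * (∑ p, z p ^ 2) ≤ ∑ i, (A.mulVec z i) ^ 2 ∧
      ∑ i, (A.mulVec z i) ^ 2 ≤ (1 + δ) * (∑ p, z p ^ 2))
    (x : Fin R × Fin Q → ℝ) (hx : BlockSparse Q R K x)
    (n : Fin N → ℝ) (ε : ℝ) (hn : euclNorm n ≤ ε)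
    (y : Fin N → ℝ) (hy : y = A.mulVec x + n)
    (xhat : Fin R × Fin Q → ℝ)
    (hfeas : euclNorm (y - A.mulVec xhat) ≤ ε)
    (hmin : ∀ z : Fin R × Fin Q → ℝ, euclNorm (y - A.mulVec z) ≤ ε →
      ∑ r, euclNorm (fun q => xhat (r, q)) ≤ ∑ r, euclNorm (fun q => z (r, q))) :
    euclNorm (x - xhat) ≤ 4 * ε * Real.sqrt (1 + δ) / (1 - (1 + Real.sqrt 2) * δ) := by
  have hδ' : (1 + √2) * δ < 1 := by nlinarith [Real.sq_sqrt (zero_le_two : (0 : ℝ) ≤ 2)]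
  have htube : euclNorm (A *ᵥ (x - xhat)) ≤ 2 * ε := by
    have hres : A *ᵥ (x - xhat) = (y - A *ᵥ xhat) - n := by rw [mulVec_sub, hy]; abel
    rw [hres]
    linarith [euclNorm_sub_le (y - A *ᵥ xhat) n]
  have hcone := sum_blockNorm_sub_compl_le (hmin x (by rwa [hy, add_sub_cancel_left]))
  have hA : HasBlockRIP A (2 * K) δ := hRIP
  calc euclNorm (x - xhat)
      ≤ 2 * √(1 + δ) * euclNorm (A *ᵥ (x - xhat)) / (1 - (1 + √2) * δ) :=
        hA.euclNorm_le_of_cone hK hδ0.le hδ' ((blockSparse_iff x).1 hx) hcone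
    _ ≤ 2 * √(1 + δ) * (2 * ε) / (1 - (1 + √2) * δ) := by gcongr
    _ = 4 * ε * √(1 + δ) / (1 - (1 + √2) * δ) := by ring

/-- Block BPDN guarantee for an exactly block `K`-sparse source: if `A` satisfies the block-RIP
of order `2K` with constant `δ < √2 − 1`, `x` is block `K`-sparse, `y = A x + n` with
`‖n‖₂ ≤ ε`, and `x̂` minimizes `∑_r ‖z_r‖₂` subject to `‖y − A z‖₂ ≤ ε`, then
`‖x − x̂‖₂ ≤ 4ε√(1+δ)/(1−(1+√2)δ)`. -/
theorem block_bpdn_recovery_exact (Q R N K : ℕ) (hQ : 1 ≤ Q) (hR : 1 ≤ R) (hN : 1 ≤ N)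
    (hK : 1 ≤ K)
    (A : Matrix (Fin N) (Fin R × Fin Q) ℝ)
    (δ : ℝ) (hδ0 : 0 < δ) (hδ : δ < Real.sqrt 2 - 1)
    (hRIP : ∀ z : Fin R × Fin Q → ℝ, BlockSparse Q R (2 * K) z →
      (1 - δ) * (∑ p, z p ^ 2) ≤ ∑ i, (A.mulVec z i) ^ 2 ∧
      ∑ i, (A.mulVec z i) ^ 2 ≤ (1 + δ) * (∑ p, z p ^ 2))
    (x : Fin R × Fin Q → ℝ) (hx : BlockSparse Q R K x)
    (n : Fin N → ℝ) (ε : ℝ) (hn : euclNorm n ≤ ε)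
    (y : Fin N → ℝ) (hy : y = A.mulVec x + n)
    (xhat : Fin R × Fin Q → ℝ)
    (hfeas : euclNorm (y - A.mulVec xhat) ≤ ε)
    (hmin : ∀ z : Fin R × Fin Q → ℝ, euclNorm (y - A.mulVec z) ≤ ε →
      ∑ r, euclNorm (fun q => xhat (r, q)) ≤ ∑ r, euclNorm (fun q => z (r, q))) :
    euclNorm (x - xhat) ≤ 4 * ε * Real.sqrt (1 + δ) / (1 - (1 + Real.sqrt 2) * δ) :=
  block_bpdn_recovery_exact_general Q R N K hK A δ hδ0 hδ hRIP x hx n ε hn y hy xhat hfeas hmin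
end
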